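/- arXiv:2509.08790 — 3 statements merged into one kernel-verified Lean document; each statement's English description precedes it below -/
import Mathlib

section
/- Let G be a symmetric positive-definite 2×2 real matrix with entries G_{ij}, let h > 0, g > 0, and let v¹, v² be real numbers with covariant components v_i = G_{i1}v¹ + G_{i2}v². Then the 3×3 matrix (1/h)·[[gh + v_1v¹ + v_2v², -v_1, -v_2], [-v_1, G_{11}, G_{12}], [-v_2, G_{21}, G_{22}]] is symmetric positive definite. -/
lemma quadaux (G : Matrix (Fin 2) (Fin 2) ℝ) (hG : G.PosDef) (a b : ℝ) :
    0 ≤ G 0 0 * a * a + G 0 1 * a * b + G 1 0 * b * a + G 1 1 * b * b := by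
  have h1 := hG.posSemidef.dotProduct_mulVec_nonneg ![a, b]
  simp [dotProduct, Matrix.mulVec, Fin.sum_univ_succ] at h1
  nlinarith [h1]

lemma quadaux' (G : Matrix (Fin 2) (Fin 2) ℝ) (hG : G.PosDef) (a b : ℝ)
    (hab : a ≠ 0 ∨ b ≠ 0) :
    0 < G 0 0 * a * a + G 0 1 * a * b + G 1 0 * b * a + G 1 1 * b * b := by
  have hne : (![a, b] : Fin 2 → ℝ) ≠ 0 := by
    intro hc
    rcases hab with ha | hb
    · exact ha (by simpa using congrFun hc 0)
    · exact hb (by simpa using congrFun hc 1)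
  have h1 := hG.dotProduct_mulVec_pos hne
  simp [dotProduct, Matrix.mulVec, Fin.sum_univ_succ] at h1
  nlinarith [h1]

/-- The Hessian of the shallow water entropy function is SPD
when `h > 0`, `g > 0`, and the metric `G` is SPD. -/
theorem entropy_hessian_posDef (G : Matrix (Fin 2) (Fin 2) ℝ) (hG : G.PosDef)
    (h g : ℝ) (hh : 0 < h) (hg : 0 < g) (v : Fin 2 → ℝ) (vlo : Fin 2 → ℝ)
    (hvlo : ∀ i, vlo i = ∑ j, G i j * v j) :
    (((1 / h) • !![g * h + vlo 0 * v 0 + vlo 1 * v 1, -vlo 0, -vlo 1;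
        -vlo 0, G 0 0, G 0 1;
        -vlo 1, G 1 0, G 1 1]) : Matrix (Fin 3) (Fin 3) ℝ).PosDef := by
  have hsym : G 1 0 = G 0 1 := by
    have := hG.isHermitian.apply 0 1
    simpa using this
  have hv0 : vlo 0 = G 0 0 * v 0 + G 0 1 * v 1 := by
    rw [hvlo 0]; simp [Fin.sum_univ_succ]
  have hv1 : vlo 1 = G 1 0 * v 0 + G 1 1 * v 1 := by
    rw [hvlo 1]; simp [Fin.sum_univ_succ]
  refine Matrix.PosDef.of_dotProduct_mulVec_pos ?_ ?_
  · show _ = _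
    ext i j
    fin_cases i <;> fin_cases j <;>
      simp [Matrix.conjTranspose_apply, hsym]
  · intro x hx
    have key : (x 0 ≠ 0) ∨ (x 1 - x 0 * v 0 ≠ 0) ∨ (x 2 - x 0 * v 1 ≠ 0) := by
      by_contra hc
      push_neg at hc
      obtain ⟨h0, h1, h2⟩ := hc
      apply hx
      funext i
      fin_cases i <;> simp_all
    have expand : dotProduct (star x) ((((1 / h) • !![g * h + vlo 0 * v 0 + vlo 1 * v 1, -vlo 0, -vlo 1;
        -vlo 0, G 0 0, G 0 1;
        -vlo 1, G 1 0, G 1 1]) : Matrix (Fin 3) (Fin 3) ℝ).mulVec x) =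
        (1 / h) * (g * h * (x 0 * x 0) +
          (G 0 0 * (x 1 - x 0 * v 0) * (x 1 - x 0 * v 0)
            + G 0 1 * (x 1 - x 0 * v 0) * (x 2 - x 0 * v 1)
            + G 1 0 * (x 2 - x 0 * v 1) * (x 1 - x 0 * v 0)
            + G 1 1 * (x 2 - x 0 * v 1) * (x 2 - x 0 * v 1))) := by
      simp [dotProduct, Matrix.mulVec, Fin.sum_univ_succ, hv0, hv1, hsym]
      ring
    rw [expand]
    have hq := quadaux G hG (x 1 - x 0 * v 0) (x 2 - x 0 * v 1)
    have hpos : 0 < 1 / h := by positivity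
    rcases key with h0 | hrest
    · have hA : 0 < g * h * (x 0 * x 0) := mul_pos (mul_pos hg hh) (mul_self_pos.mpr h0)
      exact mul_pos hpos (by linarith)
    · have hq' := quadaux' G hG (x 1 - x 0 * v 0) (x 2 - x 0 * v 1) hrest
      have hA : 0 ≤ g * h * (x 0 * x 0) := mul_nonneg (mul_pos hg hh).le (mul_self_nonneg _)
      exact mul_pos hpos (by linarith)
end

section
/- Let g > 0 and fix two states L, R each consisting of positive depth h, velocity components v¹, v², a symmetric positive-definite metric G with inverse entries G^{ij}, area element J = √(det G), covariant components v_i = G_{ij}v^j, and bottom topography b. Define the entropy variables w = (g(h+b) − ½(v_1v¹+v_2v²), v_1, v_2) and the flux potential JΨ^j = (g/2) J h² v^j. Define the two-point flux (Jf^j)^#_{L,R} componentwise by: first component ½[(Jhv^j)_L + (Jhv^j)_R]; for i = 1,2, the i-th momentum component ¼[(Jhv^jv^i)_L + (Jhv^jv^i)_R + (Jhv^j)_R(v^i)_L + (G^{ik}Jhv^j)_L(v_k)_R] + (g/2)(G^{ij}Jh)_L h_R + (g/2)(G^{ij}Jh)_L(b_R − b_L). Then the shuffle condition w_Rᵀ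 (Jf^j)^#_{R,L} − w_Lᵀ (Jf^j)^#_{L,R} = (JΨ^j)_R − (JΨ^j)_L holds for j = 1, 2. -/
/-- A state of the covariant shallow water equations at a point: fluid depth,
contravariant velocity components, metric tensor (covariant components), and
bottom topography. -/
structure SWState where
  h : ℝ
  v : Fin 2 → ℝ
  G : Matrix (Fin 2) (Fin 2) ℝ
  b : ℝ

namespace SWState

/-- Covariant velocity components `v_i = G_{ij} v^j`. -/
noncomputable def vlo (s : SWState) (i : Fin 2) : ℝ := ∑ j, s.G i j * s.v j

/-- Area element `J = √(det G)`. -/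
noncomputable def J (s : SWState) : ℝ := Real.sqrt s.G.det

/-- Contravariant metric components `G^{ij}` (entries of `G⁻¹`). -/
noncomputable def Ginv (s : SWState) : Matrix (Fin 2) (Fin 2) ℝ := s.G⁻¹

/-- Entropy variables `w = (g(h+b) − ½ v_i v^i, v_1, v_2)`. -/
noncomputable def w (g : ℝ) (s : SWState) : Fin 3 → ℝ :=
  ![g * (s.h + s.b) - (1 / 2) * ∑ i, s.vlo i * s.v i, s.vlo 0, s.vlo 1]

/-- Flux potential `J Ψ^j = (g/2) J h² v^j`. -/
noncomputable def Psi (g : ℝ) (s : SWState) (j : Fin 2) : ℝ := (g / 2) * s.J * s.h ^ 2 * s.v j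

/-- The entropy-conservative two-point flux `(Jf^j)^#_{L,R}` for the covariant
shallow water equations. -/
noncomputable def flux (g : ℝ) (L R : SWState) (j : Fin 2) : Fin 3 → ℝ :=
  Fin.cons ((1 / 2) * (L.J * L.h * L.v j + R.J * R.h * R.v j))
    (fun i : Fin 2 =>
      (1 / 4) * (L.J * L.h * L.v j * L.v i + R.J * R.h * R.v j * R.v i
          + R.J * R.h * R.v j * L.v i
          + ∑ k, L.Ginv i k * L.J * L.h * L.v j * R.vlo k)
        + (g / 2) * (L.Ginv i j * L.J * L.h) * R.h
        + (g / 2) * (L.Ginv i j * L.J * L.h) * (R.b - L.b))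

end SWState

/-- Auxiliary: `∑ i, v_i G^{ik} = v^k` for a positive-definite metric. -/
lemma vlo_mul_Ginv_aux (s : SWState) (hG : s.G.PosDef) (k : Fin 2) :
    s.vlo 0 * s.Ginv 0 k + s.vlo 1 * s.Ginv 1 k = s.v k := by
  have hdet : IsUnit s.G.det := isUnit_iff_ne_zero.mpr hG.det_pos.ne'
  have h1 : s.G * s.G⁻¹ = 1 := Matrix.mul_nonsing_inv _ hdet
  have e : ∀ a b : Fin 2, s.G a 0 * s.G⁻¹ 0 b + s.G a 1 * s.G⁻¹ 1 b
      = (1 : Matrix (Fin 2) (Fin 2) ℝ) a b := by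
    intro a b
    have := congrFun (congrFun h1 a) b
    simpa [Matrix.mul_apply, Fin.sum_univ_two] using this
  have e00 := e 0 0; have e10 := e 1 0; have e01 := e 0 1; have e11 := e 1 1
  simp [Matrix.one_apply] at e00 e10 e01 e11
  have hsym : s.G 0 1 = s.G 1 0 := by
    have h := congrFun (congrFun hG.isHermitian 0) 1
    simpa [Matrix.conjTranspose_apply] using h.symm
  fin_cases k
  · simp only [SWState.vlo, SWState.Ginv, Fin.sum_univ_two, Fin.mk_zero, Fin.mk_one]
    linear_combination s.v 0 * e00 + s.v 1 * e10 +
      (s.v 1 * s.G⁻¹ 0 0 - s.v 0 * s.G⁻¹ 1 0) * hsym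
  · simp only [SWState.vlo, SWState.Ginv, Fin.sum_univ_two, Fin.mk_zero, Fin.mk_one]
    linear_combination s.v 0 * e01 + s.v 1 * e11 +
      (s.v 1 * s.G⁻¹ 0 1 - s.v 0 * s.G⁻¹ 1 1) * hsym

/-- The two-point flux satisfies the entropy-conservation
(non-symmetric Tadmor / shuffle) condition
`w_Rᵀ (Jf^j)^#_{R,L} − w_Lᵀ (Jf^j)^#_{L,R} = (JΨ^j)_R − (JΨ^j)_L`. -/
theorem flux_shuffle_condition (g : ℝ) (hg : 0 < g) (L R : SWState)
    (hL : 0 < L.h) (hR : 0 < R.h) (hGL : L.G.PosDef) (hGR : R.G.PosDef)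
    (j : Fin 2) :
    ∑ i, SWState.w g R i * SWState.flux g R L j i
      - ∑ i, SWState.w g L i * SWState.flux g L R j i
      = SWState.Psi g R j - SWState.Psi g L j := by
  have eL0 := vlo_mul_Ginv_aux L hGL 0
  have eL1 := vlo_mul_Ginv_aux L hGL 1
  have eLj := vlo_mul_Ginv_aux L hGL j
  have eR0 := vlo_mul_Ginv_aux R hGR 0
  have eR1 := vlo_mul_Ginv_aux R hGR 1
  have eRj := vlo_mul_Ginv_aux R hGR j
  simp only [SWState.w, SWState.flux, SWState.Psi, Fin.sum_univ_succ, Fin.sum_univ_zero,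
    Fin.sum_univ_two, Fin.cons_zero, Fin.cons_succ, Matrix.cons_val_zero, Matrix.cons_val_succ,
    Matrix.cons_val_one, Matrix.head_cons, Fin.succ_zero_eq_one]
  linear_combination
    (-(1/4) * L.J * L.h * L.v j * R.vlo 0) * eL0
    + (-(1/4) * L.J * L.h * L.v j * R.vlo 1) * eL1
    + (-(g/2) * L.J * L.h * (R.h + R.b - L.b)) * eLj
    + ((1/4) * R.J * R.h * R.v j * L.vlo 0) * eR0
    + ((1/4) * R.J * R.h * R.v j * L.vlo 1) * eR1
    + ((g/2) * R.J * R.h * (L.h + L.b - R.b)) * eRj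
end

section
/- Let g > 0, and for each state define entropy variables w = (g(h+b) − ½ v_iv^i, v_1, v_2) and source term s = (0, −½(Γ^1_{jk}hv^jv^k − G^{1k}Γ^l_{jk}hv^jv_l) − fJG^{1j}ε_{jk}hv^k, −½(Γ^2_{jk}hv^jv^k − G^{2k}Γ^l_{jk}hv^jv_l) − fJG^{2j}ε_{jk}hv^k), where ε_{12} = 1 = −ε_{21}, ε_{11} = ε_{22} = 0, G is SPD with inverse entries G^{ij}, v_i = G_{ij}v^j, and Γ^i_{jk} is symmetric in j,k. Then wᵀ s = 0. -/
/-- The combined geometric and Coriolis source term of the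
covariant shallow water equations is entropy-neutral: `wᵀ s = 0`. -/
theorem source_term_entropy_neutral (g b f Jv h : ℝ) (hg : 0 < g)
    (G : Matrix (Fin 2) (Fin 2) ℝ) (hG : G.PosDef)
    (Γ : Fin 2 → Fin 2 → Fin 2 → ℝ) (hΓ : ∀ i j k, Γ i j k = Γ i k j)
    (ε : Matrix (Fin 2) (Fin 2) ℝ) (hε : ε = !![0, 1; -1, 0])
    (v : Fin 2 → ℝ) (vlo : Fin 2 → ℝ) (hvlo : ∀ i, vlo i = ∑ j, G i j * v j)
    (w : Fin 3 → ℝ)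
    (hw : w = ![g * (h + b) - (1 / 2) * ∑ i, vlo i * v i, vlo 0, vlo 1])
    (s : Fin 3 → ℝ)
    (hs : s = Fin.cons 0 (fun a : Fin 2 =>
      -(1 / 2) * ((∑ j, ∑ k, Γ a j k * h * v j * v k)
          - ∑ k, G⁻¹ a k * ∑ j, ∑ l, Γ l j k * h * v j * vlo l)
        - f * Jv * ∑ j, G⁻¹ a j * ∑ k, ε j k * h * v k)) :
    ∑ i, w i * s i = 0 := by
  have hdet : IsUnit G.det := isUnit_iff_ne_zero.mpr hG.det_pos.ne'
  have hinv : G * G⁻¹ = 1 := Matrix.mul_nonsing_inv G hdet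
  have hsym : G 1 0 = G 0 1 := by
    have := hG.isHermitian.apply 1 0
    simpa using this.symm
  have e : ∀ m k : Fin 2, G m 0 * G⁻¹ 0 k + G m 1 * G⁻¹ 1 k
      = if m = k then 1 else 0 := by
    intro m k
    have := congrFun (congrFun hinv m) k
    simpa [Matrix.mul_apply, Fin.sum_univ_succ, Matrix.one_apply] using this
  have e00 := e 0 0; have e10 := e 1 0; have e01 := e 0 1; have e11 := e 1 1
  norm_num at e00 e10 e01 e11
  have k0 : vlo 0 * G⁻¹ 0 0 + vlo 1 * G⁻¹ 1 0 = v 0 := by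
    rw [hvlo 0, hvlo 1]
    simp [Fin.sum_univ_succ]
    linear_combination v 0 * e00 + v 1 * e10 + (v 0 * G⁻¹ 1 0 - v 1 * G⁻¹ 0 0) * hsym
  have k1 : vlo 0 * G⁻¹ 0 1 + vlo 1 * G⁻¹ 1 1 = v 1 := by
    rw [hvlo 0, hvlo 1]
    simp [Fin.sum_univ_succ]
    linear_combination v 0 * e01 + v 1 * e11 + (v 0 * G⁻¹ 1 1 - v 1 * G⁻¹ 0 1) * hsym
  subst hw hs hε
  simp only [Fin.sum_univ_succ, Fin.sum_univ_zero, Fin.cons_zero, Fin.cons_succ,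
    Matrix.cons_val_zero, Matrix.cons_val_one, Matrix.head_cons, Matrix.cons_val',
    Matrix.empty_val', Matrix.cons_val_fin_one, Fin.succ_zero_eq_one,
    Matrix.cons_val_succ, Matrix.of_apply]
  linear_combination
    ((1/2) * (h * (Γ 0 0 0 * v 0 * vlo 0 + Γ 1 0 0 * v 0 * vlo 1
        + Γ 0 1 0 * v 1 * vlo 0 + Γ 1 1 0 * v 1 * vlo 1)) - f * Jv * (h * v 1)) * k0 +
    ((1/2) * (h * (Γ 0 0 1 * v 0 * vlo 0 + Γ 1 0 1 * v 0 * vlo 1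
        + Γ 0 1 1 * v 1 * vlo 0 + Γ 1 1 1 * v 1 * vlo 1)) + f * Jv * (h * v 0)) * k1
end
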